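/- Assume in addition that λ0 is purely imaginary (Re(λ0) = 0) and that the parameter vector β ∈ ℂ^{n+1} satisfies β = J·conj(β), i.e. its first component β_1 is real and β_{1+j} = −conj(β_{1+(n+1−j)}) for every j = 1,…,n. Then the first-order rogue wave is parity-time symmetric: for every j = 1,…,n and all (x,t) ∈ ℝ², q_j^{[1]}(x,t) = conj( q_{n+1−j}^{[1]}(x, −t) ). -/

import Mathlib

open Complex Matrix Finset

noncomputable section

/-- Index type for `(n+1)×(n+1)` matrices: a `1`-block plus an `n`-block. -/
abbrev Idx (n : ℕ) := Fin 1 ⊕ Fin n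

/-- `ζ = 2·Im(λ0)/(n+1)`. -/
def zeta (n : ℕ) (l0 : ℂ) : ℝ := 2 * l0.im / (n + 1)

/-- `ω_j = jπ/(n+1)`. -/
def om (n j : ℕ) : ℝ := j * Real.pi / (n + 1)

/-- `a_j = ζ·csc(ω_j)` for `j = 1,…,n` (indexed by `j : Fin n` as `j+1`). -/
def aa (n : ℕ) (l0 : ℂ) (j : Fin n) : ℝ := zeta n l0 / Real.sin (om n ((j : ℕ) + 1))

/-- `b_j = ζ·cot(ω_j) − 2·Re(λ0)` for `j = 1,…,n`. -/
def bb (n : ℕ) (l0 : ℂ) (j : Fin n) : ℝ :=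
  zeta n l0 * (Real.cos (om n ((j : ℕ) + 1)) / Real.sin (om n ((j : ℕ) + 1))) - 2 * l0.re

/-- `z0 = 2·Re(λ0) + i·ζ`. -/
def zz0 (n : ℕ) (l0 : ℂ) : ℂ := 2 * l0.re + Complex.I * zeta n l0

/-- The `(n+1)×(n+1)` matrix `B` with `(1,1)` entry `i·n·ζ`, first row/column entries `a_j`,
diagonal entries `−(z0 + b_j)` and all other entries `0`. -/
def Bmat (n : ℕ) (l0 : ℂ) : Matrix (Idx n) (Idx n) ℂ :=
  Matrix.fromBlocks
    (Matrix.of fun _ _ => Complex.I * n * zeta n l0)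
    (Matrix.of fun _ j => (aa n l0 j : ℂ))
    (Matrix.of fun i _ => (aa n l0 i : ℂ))
    (Matrix.diagonal fun j => -(zz0 n l0 + (bb n l0 j : ℂ)))

/-- The vector `ξ_0 = (1, a_1/(z0+b_1), …, a_n/(z0+b_n))ᵀ`. -/
def xi0 (n : ℕ) (l0 : ℂ) : Idx n → ℂ :=
  Sum.elim (fun _ => 1)
    (fun k : Fin n => (aa n l0 k : ℂ) / (zz0 n l0 + (bb n l0 k : ℂ)))

/-- The matrix polynomial
`A(x,t) = Σ_{s=0}^{n} Σ_{k=0}^{⌊n/2⌋} (i^{s+k}/(2^k s! k!)) B^{s+2k} (x+z0 t)^s t^k`. -/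
def Amat (n : ℕ) (l0 : ℂ) (x t : ℝ) : Matrix (Idx n) (Idx n) ℂ :=
  ∑ s ∈ Finset.range (n + 1), ∑ k ∈ Finset.range (n / 2 + 1),
    ((Complex.I ^ (s + k) * ((x : ℂ) + zz0 n l0 * (t : ℂ)) ^ s * (t : ℂ) ^ k) /
        ((2 : ℂ) ^ k * (Nat.factorial s : ℂ) * (Nat.factorial k : ℂ))) •
      (Bmat n l0) ^ (s + 2 * k)

/-- The plane-wave phase `θ_j(x,t) = b_j x − (b_j²/2 − Σ_k a_k²) t`. -/
def theta (n : ℕ) (l0 : ℂ) (j : Fin n) (x t : ℝ) : ℝ :=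
  bb n l0 j * x - ((bb n l0 j) ^ 2 / 2 - ∑ k, (aa n l0 k) ^ 2) * t

/-- The plane-wave background `q_j^{bg}(x,t) = a_j e^{iθ_j(x,t)}`. -/
def qbg (n : ℕ) (l0 : ℂ) (j : Fin n) (x t : ℝ) : ℂ :=
  (aa n l0 j : ℂ) * Complex.exp (Complex.I * (theta n l0 j x t : ℝ))

/-- The vector `w(x,t) = A(x,t)·β`. -/
def wvec (n : ℕ) (l0 : ℂ) (β : Idx n → ℂ) (x t : ℝ) : Idx n → ℂ :=
  (Amat n l0 x t).mulVec β

/-- The first-order rogue wave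
`q_j^{[1]} = q_j^{bg}·(1 − 2i(n+1)ζ w_{j+1} conj(w_1)/(a_j ‖w‖²))`. -/
def q1 (n : ℕ) (l0 : ℂ) (β : Idx n → ℂ) (j : Fin n) (x t : ℝ) : ℂ :=
  qbg n l0 j x t *
    (1 - 2 * Complex.I * ((n : ℂ) + 1) * (zeta n l0 : ℝ) *
        wvec n l0 β x t (Sum.inr j) * (starRingEnd ℂ) (wvec n l0 β x t (Sum.inl 0)) /
      ((aa n l0 j : ℂ) * ((∑ i, Complex.normSq (wvec n l0 β x t i) : ℝ) : ℂ)))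

/-! When `Re λ0 = 0`, complex conjugation fixes the `a_j`, flips the signs of `i n ζ` and `z0`,
and reversing the index `j ↦ n + 1 - j` turns `b_j` into `-b_j`; in matrix form this is
`conj B = -J B J` with `J² = 1`. Hence `conj (B^m) = (-1)^m J B^m J`, and this sign is exactly
cancelled by conjugating the coefficients of `A` evaluated at `-t`, so `conj A(x,-t) = J A(x,t) J`.
Together with `conj β = J β` this gives `conj w(x,-t) = J w(x,t)`: the first component is
conjugated, the `j`-th becomes `-w_{n+1-j}` and `‖w‖` is preserved. Since also
`conj q^bg_{n+1-j}(x,-t) = q^bg_j(x,t)`, the symmetry of `q^{[1]}` follows. -/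

section Jmat

variable (R : Type*) [Ring R] (n : ℕ)

def revMat : Matrix (Fin n) (Fin n) R := (Fin.revPerm : Equiv.Perm (Fin n)).toPEquiv.toMatrix

/-- The matrix `J = diag(1, -P)` of the paper. -/
def Jmat : Matrix (Idx n) (Idx n) R := fromBlocks 1 0 0 (-revMat R n)

variable {R n}

lemma revMat_mul {α : Type*} [Fintype α] (M : Matrix (Fin n) α R) :
    revMat R n * M = M.submatrix Fin.rev id :=
  PEquiv.toMatrix_toPEquiv_mul _ _

lemma mul_revMat {α : Type*} (M : Matrix α (Fin n) R) :
    M * revMat R n = M.submatrix id Fin.rev := by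
  rw [revMat, PEquiv.mul_toMatrix_toPEquiv, Fin.revPerm_symm]
  rfl

lemma revMat_mul_self : revMat R n * revMat R n = 1 := by
  rw [revMat_mul]
  ext i j
  simp [revMat, one_apply]

lemma Jmat_mul_self : Jmat R n * Jmat R n = 1 := by
  simp [Jmat, fromBlocks_multiply, revMat_mul_self, ← fromBlocks_one]

lemma Jmat_mul_fromBlocks_mul_Jmat (A : Matrix (Fin 1) (Fin 1) R) (B : Matrix (Fin 1) (Fin n) R)
    (C : Matrix (Fin n) (Fin 1) R) (D : Matrix (Fin n) (Fin n) R) :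
    Jmat R n * fromBlocks A B C D * Jmat R n =
      fromBlocks A (-B.submatrix id Fin.rev) (-C.submatrix Fin.rev id)
        (D.submatrix Fin.rev Fin.rev) := by
  simp [Jmat, fromBlocks_multiply, revMat_mul, mul_revMat]

lemma Jmat_mulVec_inl (v : Idx n → R) (i : Fin 1) :
    (Jmat R n *ᵥ v) (Sum.inl i) = v (Sum.inl i) := by
  simp [Jmat, fromBlocks_mulVec]

lemma Jmat_mulVec_inr (v : Idx n → R) (k : Fin n) :
    (Jmat R n *ᵥ v) (Sum.inr k) = -v (Sum.inr k.rev) := by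
  simp [Jmat, fromBlocks_mulVec, neg_mulVec, revMat, PEquiv.toMatrix_toPEquiv_mulVec]

end Jmat

lemma om_rev (n : ℕ) (j : Fin n) : om n ((j.rev : ℕ) + 1) = Real.pi - om n ((j : ℕ) + 1) := by
  have hj : (j.rev : ℕ) + 1 = n - (j : ℕ) := by rw [Fin.val_rev]; omega
  rw [om, om, hj, Nat.cast_sub j.isLt.le]
  field_simp
  push_cast
  ring

section PurelyImaginary

variable (n : ℕ) {l0 : ℂ}

lemma aa_rev (j : Fin n) : aa n l0 j.rev = aa n l0 j := by
  rw [aa, aa, om_rev, Real.sin_pi_sub]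

lemma bb_rev (hre : l0.re = 0) (j : Fin n) : bb n l0 j.rev = -bb n l0 j := by
  rw [bb, bb, om_rev, Real.sin_pi_sub, Real.cos_pi_sub, hre]
  ring

lemma conj_zz0 (hre : l0.re = 0) : starRingEnd ℂ (zz0 n l0) = -zz0 n l0 := by
  simp [zz0, hre]

lemma Bmat_map_conj (hre : l0.re = 0) :
    (Bmat n l0).map (starRingEnd ℂ) = -(Jmat ℂ n * Bmat n l0 * Jmat ℂ n) := by
  rw [Bmat, Jmat_mul_fromBlocks_mul_Jmat, fromBlocks_map, fromBlocks_neg]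
  congr 1 <;> ext i j
  · simp
  · simp [aa_rev]
  · simp [aa_rev]
  · by_cases h : i = j
    · simp only [h, map_apply, diagonal_apply_eq, map_neg, map_add, conj_ofReal, conj_zz0 n hre,
        Matrix.neg_apply, submatrix_apply, bb_rev n hre, ofReal_neg]
      ring
    · simp [h]

lemma Bmat_pow_map_conj (hre : l0.re = 0) (m : ℕ) :
    (Bmat n l0 ^ m).map (starRingEnd ℂ) =
      (-1 : ℂ) ^ m • (Jmat ℂ n * Bmat n l0 ^ m * Jmat ℂ n) := by
  have hJ : Jmat ℂ n * Jmat ℂ n = 1 := Jmat_mul_self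
  rw [← RingHom.mapMatrix_apply, map_pow, RingHom.mapMatrix_apply, Bmat_map_conj n hre,
    ← neg_one_smul ℂ, smul_pow]
  exact congrArg _ (Units.conj_pow ⟨Jmat ℂ n, Jmat ℂ n, hJ, hJ⟩ _ m)

lemma conj_Amat_coeff (hre : l0.re = 0) (x t : ℝ) (s k : ℕ) :
    starRingEnd ℂ
        (I ^ (s + k) * ((x : ℂ) + zz0 n l0 * ((-t : ℝ) : ℂ)) ^ s * ((-t : ℝ) : ℂ) ^ k /
        (2 ^ k * (Nat.factorial s : ℂ) * (Nat.factorial k : ℂ))) =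
      (-1) ^ s * (I ^ (s + k) * ((x : ℂ) + zz0 n l0 * t) ^ s * (t : ℂ) ^ k /
        (2 ^ k * (Nat.factorial s : ℂ) * (Nat.factorial k : ℂ))) := by
  simp only [map_div₀, map_mul, map_pow, map_add, conj_I, conj_ofReal, conj_zz0 n hre,
    map_natCast, map_ofNat, ofReal_neg, map_neg]
  have hsign : (-1 : ℂ) ^ (s + k) * (-1) ^ k = (-1) ^ s := by
    rw [pow_add, mul_assoc, ← pow_add, Even.neg_one_pow ⟨k, rfl⟩, mul_one]
  rw [neg_pow I, neg_pow (t : ℂ)]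
  linear_combination (I ^ (s + k) * ((x : ℂ) + zz0 n l0 * t) ^ s * (t : ℂ) ^ k /
    (2 ^ k * (Nat.factorial s : ℂ) * (Nat.factorial k : ℂ))) * hsign

lemma Amat_neg_map_conj (hre : l0.re = 0) (x t : ℝ) :
    (Amat n l0 x (-t)).map (starRingEnd ℂ) = Jmat ℂ n * Amat n l0 x t * Jmat ℂ n := by
  simp only [Amat, ← RingHom.mapMatrix_apply, map_sum, Finset.mul_sum, Finset.sum_mul]
  refine Finset.sum_congr rfl fun s _ => Finset.sum_congr rfl fun k _ => ?_
  rw [RingHom.mapMatrix_apply, Matrix.map_smul' _ _ _ (map_mul _), Bmat_pow_map_conj n hre,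
    conj_Amat_coeff n hre, smul_smul, Matrix.mul_smul, Matrix.smul_mul]
  congr 1
  rw [mul_right_comm, ← pow_add, Even.neg_one_pow ⟨s + k, by ring⟩, one_mul]

lemma star_wvec_neg (hre : l0.re = 0) {β : Idx n → ℂ} (hβ : star β = Jmat ℂ n *ᵥ β)
    (x t : ℝ) : star (wvec n l0 β x (-t)) = Jmat ℂ n *ᵥ wvec n l0 β x t := by
  funext i
  rw [Pi.star_apply, ← starRingEnd_apply, wvec, RingHom.map_mulVec, Amat_neg_map_conj n hre]
  change ((Jmat ℂ n * Amat n l0 x t * Jmat ℂ n) *ᵥ star β) i = _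
  rw [hβ, mulVec_mulVec, Matrix.mul_assoc, Jmat_mul_self, Matrix.mul_one, ← mulVec_mulVec, wvec]

lemma sum_normSq_Jmat_mulVec (v : Idx n → ℂ) :
    ∑ i, normSq ((Jmat ℂ n *ᵥ v) i) = ∑ i, normSq (v i) := by
  simp only [Fintype.sum_sum_type, Jmat_mulVec_inl, Jmat_mulVec_inr, normSq_neg]
  congr 1
  exact Fintype.sum_equiv Fin.revPerm _ _ fun _ => rfl

lemma sum_normSq_wvec_neg (hre : l0.re = 0) {β : Idx n → ℂ}
    (hβ : star β = Jmat ℂ n *ᵥ β) (x t : ℝ) :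
    ∑ i, normSq (wvec n l0 β x (-t) i) = ∑ i, normSq (wvec n l0 β x t i) := by
  rw [← sum_normSq_Jmat_mulVec, ← star_wvec_neg n hre hβ]
  simp

lemma theta_rev (hre : l0.re = 0) (j : Fin n) (x t : ℝ) :
    theta n l0 j.rev x (-t) = -theta n l0 j x t := by
  rw [theta, theta, bb_rev n hre]
  ring

lemma conj_qbg_rev (hre : l0.re = 0) (j : Fin n) (x t : ℝ) :
    starRingEnd ℂ (qbg n l0 j.rev x (-t)) = qbg n l0 j x t := by
  rw [qbg, qbg, map_mul, conj_ofReal, ← exp_conj, map_mul, conj_I, conj_ofReal, aa_rev,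
    theta_rev n hre]
  push_cast
  ring_nf

end PurelyImaginary

lemma star_eq_Jmat_mulVec {n : ℕ} {β : Idx n → ℂ} (hβ1 : (β (Sum.inl 0)).im = 0)
    (hβJ : ∀ k : Fin n, β (Sum.inr k) = -(starRingEnd ℂ) (β (Sum.inr k.rev))) :
    star β = Jmat ℂ n *ᵥ β := by
  funext i
  rcases i with i | k
  · rw [Jmat_mulVec_inl, Subsingleton.elim i 0]
    exact conj_eq_iff_im.mpr hβ1
  · rw [Jmat_mulVec_inr, hβJ k.rev, Fin.rev_rev, neg_neg]
    rfl

theorem stmt15_general (n : ℕ) (l0 : ℂ) (hre : l0.re = 0)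
    (β : Idx n → ℂ)
    (hβ1 : (β (Sum.inl 0)).im = 0)
    (hβJ : ∀ k : Fin n, β (Sum.inr k) = -(starRingEnd ℂ) (β (Sum.inr k.rev))) :
    ∀ (j : Fin n) (x t : ℝ),
      q1 n l0 β j x t = (starRingEnd ℂ) (q1 n l0 β j.rev x (-t)) := by
  intro j x t
  have hβ := star_eq_Jmat_mulVec hβ1 hβJ
  have hw (i : Idx n) := congrFun (star_wvec_neg n hre hβ x t) i
  have hw1 : wvec n l0 β x (-t) (Sum.inl 0) = starRingEnd ℂ (wvec n l0 β x t (Sum.inl 0)) := by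
    simpa [Jmat_mulVec_inl] using congrArg (starRingEnd ℂ) (hw (Sum.inl 0))
  have hwj :
      starRingEnd ℂ (wvec n l0 β x (-t) (Sum.inr j.rev)) = -wvec n l0 β x t (Sum.inr j) := by
    simpa [Jmat_mulVec_inr] using hw (Sum.inr j.rev)
  rw [q1, q1, map_mul, conj_qbg_rev n hre, map_sub, map_one, map_div₀]
  simp only [map_mul, conj_I, conj_ofReal, map_add, map_natCast, map_one, map_ofNat, hwj, hw1,
    conj_conj, aa_rev, sum_normSq_wvec_neg n hre hβ]
  ring

/-- parity-time symmetry. If `λ0` is purely imaginary and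
`β = J·conj(β)` (first component real, `β_{1+j} = −conj(β_{1+(n+1−j)})`), then
`q_j^{[1]}(x,t) = conj(q_{n+1−j}^{[1]}(x,−t))`. -/
theorem stmt15 (n : ℕ) (hn : 1 ≤ n) (l0 : ℂ) (hre : l0.re = 0) (him : l0.im ≠ 0)
    (β : Idx n → ℂ) (hβ : LinearIndependent ℂ ![β, xi0 n l0])
    (hβ1 : (β (Sum.inl 0)).im = 0)
    (hβJ : ∀ k : Fin n, β (Sum.inr k) = -(starRingEnd ℂ) (β (Sum.inr k.rev))) :
    ∀ (j : Fin n) (x t : ℝ),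
      q1 n l0 β j x t = (starRingEnd ℂ) (q1 n l0 β j.rev x (-t)) :=
  stmt15_general n l0 hre β hβ1 hβJ

end
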